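/- arXiv:1907.10724 — 11 statements merged into one kernel-verified Lean document; each statement's English description precedes it below -/
import Mathlib

section
/- Let r, s, L be nonnegative integers with r < L and let x ∈ 𝔽₂^L. Then B(x,r) = ⋂_{z ∈ W_s} B(x+z, r+s) if and only if r + 2s + 1 ≤ L. -/
/-!
Translating by `x` moves the centre to `0`, and over `ZMod 2` the Hamming distance is the size of
the symmetric difference of supports. The all-ones vector `x + 1` lies outside `B(x, r)` but at
distance exactly `L - s` from every centre `x + z` with `wt z = s`, so equality forces
`r + s < L - s`. Conversely, if `y` is at distance `t > r` from `x`, a support `S` of size `s`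
that avoids `supp (y - x)`, or else contains its complement, gives a centre `x + z` at distance
at least `min (t + s) (L - s) > r + s` from `y`.
-/

/-- The Hamming ball of radius `ρ` centered at `x` in `𝔽₂^L`. -/
def pball (L : ℕ) (x : Fin L → ZMod 2) (ρ : ℕ) : Set (Fin L → ZMod 2) :=
  {y | hammingDist x y ≤ ρ}

open Finset
open scoped symmDiff

theorem hammingDist_add_left_eq {ι : Type*} [Fintype ι] {β : ι → Type*}
    [∀ i, AddCommGroup (β i)] [∀ i, DecidableEq (β i)] (x z y : ∀ i, β i) :
    hammingDist (x + z) y = hammingDist z (y - x) := by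
  rw [hammingDist_eq_hammingNorm, hammingDist_eq_hammingNorm]
  congr 1
  abel

theorem Finset.exists_card_eq_lt_card_symmDiff {α : Type*} [Fintype α] [DecidableEq α]
    {r s : ℕ} (E : Finset α) (hE : r < #E) (h : r + 2 * s + 1 ≤ Fintype.card α) :
    ∃ S : Finset α, #S = s ∧ r + s < #(E ∆ S) := by
  rcases le_total s #Eᶜ with hs | hs
  · obtain ⟨S, hSE, rfl⟩ := exists_subset_card_eq hs
    have hdisj : Disjoint E S := disjoint_right.2 fun i hi => mem_compl.1 (hSE hi)
    refine ⟨S, rfl, ?_⟩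
    rw [hdisj.symmDiff_eq_sup, sup_eq_union, card_union_of_disjoint hdisj]
    omega
  · obtain ⟨S, hES, rfl⟩ := exists_superset_card_eq hs (by omega)
    have hsub : Sᶜ ⊆ E ∆ S := fun i hi =>
      mem_symmDiff.2 (Or.inl ⟨notMem_compl.1 (mt (@hES i) (mem_compl.1 hi)), mem_compl.1 hi⟩)
    refine ⟨S, rfl, ?_⟩
    have := card_le_card hsub
    rw [card_compl] at this
    omega

section ZModTwo

variable {ι : Type*} [Fintype ι]

def hammingSupport (x : ι → ZMod 2) : Finset ι := {i | x i ≠ 0}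

theorem hammingNorm_eq_card_hammingSupport (x : ι → ZMod 2) :
    hammingNorm x = #(hammingSupport x) := rfl

variable [DecidableEq ι]

theorem hammingDist_eq_card_symmDiff (x y : ι → ZMod 2) :
    hammingDist x y = #(hammingSupport x ∆ hammingSupport y) := by
  unfold hammingDist hammingSupport
  congr 1
  ext i
  simp only [mem_filter, mem_univ, true_and, mem_symmDiff]
  generalize x i = a, y i = b
  revert a b
  decide

theorem exists_hammingSupport_eq (S : Finset ι) : ∃ x : ι → ZMod 2, hammingSupport x = S :=
  ⟨fun i => if i ∈ S then 1 else 0, by ext i; by_cases hi : i ∈ S <;> simp [hammingSupport, hi]⟩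

theorem hammingDist_one_right (x : ι → ZMod 2) :
    hammingDist x 1 = Fintype.card ι - hammingNorm x := by
  have : hammingSupport (1 : ι → ZMod 2) = univ := by ext; simp [hammingSupport]
  rw [hammingDist_eq_card_symmDiff, this, ← top_eq_univ, symmDiff_top, hnot_eq_compl, card_compl,
    hammingNorm_eq_card_hammingSupport]

theorem exists_hammingNorm_eq_lt_hammingDist {r s : ℕ} (e : ι → ZMod 2)
    (he : r < hammingNorm e) (h : r + 2 * s + 1 ≤ Fintype.card ι) :
    ∃ z : ι → ZMod 2, hammingNorm z = s ∧ r + s < hammingDist z e := by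
  obtain ⟨S, hS, hlt⟩ := (hammingSupport e).exists_card_eq_lt_card_symmDiff he h
  obtain ⟨z, rfl⟩ := exists_hammingSupport_eq S
  exact ⟨z, hS, by rwa [hammingDist_eq_card_symmDiff, symmDiff_comm]⟩

end ZModTwo

theorem pball_subset_iInter_pball (L r s : ℕ) (x : Fin L → ZMod 2) :
    pball L x r ⊆ ⋂ z ∈ {z : Fin L → ZMod 2 | hammingNorm z = s}, pball L (x + z) (r + s) := by
  intro y hy
  simp only [Set.mem_iInter]
  intro z hz
  calc hammingDist (x + z) y ≤ hammingDist (x + z) x + hammingDist x y := hammingDist_triangle _ _ _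
    _ ≤ s + r := by
      gcongr
      · rw [hammingDist_comm, hammingDist_eq_hammingNorm, neg_add_cancel_left, hz]
      · exact hy
    _ = r + s := add_comm s r

theorem stmt0 (L r s : ℕ) (hr : r < L) (x : Fin L → ZMod 2) :
    (pball L x r =
      ⋂ z ∈ {z : Fin L → ZMod 2 | hammingNorm z = s}, pball L (x + z) (r + s)) ↔
    r + 2 * s + 1 ≤ L := by
  have dist_center (y : Fin L → ZMod 2) : hammingDist x y = hammingNorm (y - x) := by
    rw [hammingDist_eq_hammingNorm, neg_add_eq_sub]
  have mem_iInter (y : Fin L → ZMod 2) :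
      y ∈ ⋂ z ∈ {z : Fin L → ZMod 2 | hammingNorm z = s}, pball L (x + z) (r + s) ↔
        ∀ z, hammingNorm z = s → hammingDist z (y - x) ≤ r + s := by
    simp [pball, hammingDist_add_left_eq]
  constructor
  · intro h
    have hfar : x + 1 ∉ pball L x r := by
      simpa [pball, dist_center, ← hammingDist_zero_left, hammingDist_one_right] using hr
    rw [h, mem_iInter] at hfar
    push Not at hfar
    obtain ⟨z, hz, hlt⟩ := hfar
    have hsL : s ≤ L := by simpa [hz] using hammingNorm_le_card_fintype (x := z)
    rw [add_sub_cancel_left, hammingDist_one_right, hz, Fintype.card_fin] at hlt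
    omega
  · intro hL
    refine (pball_subset_iInter_pball L r s x).antisymm fun y hy => ?_
    by_contra hfar
    obtain ⟨z, hz, hlt⟩ := exists_hammingNorm_eq_lt_hammingDist (y - x)
      (by simpa [pball, dist_center] using hfar) (by simpa using hL)
    exact ((mem_iInter y).1 hy z hz).not_gt hlt
end

section
/- Let r, s, L be nonnegative integers with s ≥ 1 and L ≥ 2s + r + 1, and let C ⊆ W_s be an (L,s,r) PPRIC code. If v ∈ 𝔽₂^L satisfies supp(v) ∩ supp(c) ≠ ∅ for every c ∈ C, then wt(v) ≥ r + 3. -/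
/-- `C` is an `(L,s,r)` PPRIC code: a set of words of Hamming weight exactly `s`
such that `B(0,r) = ⋂_{c ∈ C} B(c, r+s)`. -/
def IsPPRIC (L s r : ℕ) (C : Set (Fin L → ZMod 2)) : Prop :=
  (∀ c ∈ C, hammingNorm c = s) ∧
  pball L 0 r = ⋂ c ∈ C, pball L c (r + s)

/-!
Suppose `wt v ≤ r + 2`. Enlarge the support of `v` to a word `w` of weight `r + 1` or `r + 2`.
Over `𝔽₂`, `d(c, w) = wt c + wt w - 2 |supp c ∩ supp w|`, and `supp w` meets every `supp c`,
so `d(c, w) ≤ s + (r + 2) - 2 = r + s` for all `c ∈ C`. The PPRIC property then puts `w` in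
`B(0, r)`, contradicting `wt w ≥ r + 1`.
-/

open Finset

theorem hammingDist_add_two_mul_card_common_support {ι : Type*} [Fintype ι]
    (x y : ι → ZMod 2) :
    hammingDist x y + 2 * #{i | x i ≠ 0 ∧ y i ≠ 0} = hammingNorm x + hammingNorm y := by
  have pointwise : ∀ a b : ZMod 2, ((if a ≠ b then 1 else 0) + 2 * if a ≠ 0 ∧ b ≠ 0 then 1 else 0)
      = (if a ≠ 0 then 1 else 0) + if b ≠ 0 then 1 else 0 := by decide
  simp only [hammingDist, hammingNorm, card_filter, mul_sum, ← sum_add_distrib]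
  exact sum_congr rfl fun i _ => pointwise (x i) (y i)

theorem exists_support_superset_hammingNorm_eq {ι β : Type*} [Fintype ι] [DecidableEq β] [Zero β]
    [One β] [NeZero (1 : β)] (v : ι → β) {k : ℕ} (hvk : hammingNorm v ≤ k)
    (hk : k ≤ Fintype.card ι) :
    ∃ w : ι → β, (∀ i, v i ≠ 0 → w i ≠ 0) ∧ hammingNorm w = k := by
  classical
  obtain ⟨S, hvS, -, hSk⟩ := exists_subsuperset_card_eq (subset_univ _) hvk hk
  refine ⟨fun i => if i ∈ S then 1 else 0, fun i hi => ?_, ?_⟩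
  · simp [hvS (mem_filter.2 ⟨mem_univ i, hi⟩)]
  · simp [hammingNorm, ← hSk]

theorem IsPPRIC.hammingNorm_le_of_forall_hammingDist_le {L s r : ℕ} {C : Set (Fin L → ZMod 2)}
    (hC : IsPPRIC L s r C) {y : Fin L → ZMod 2} (hy : ∀ c ∈ C, hammingDist c y ≤ r + s) :
    hammingNorm y ≤ r := by
  have hy_mem : y ∈ pball L 0 r := hC.2 ▸ Set.mem_iInter₂.2 hy
  simpa [pball] using hy_mem

theorem stmt1_general (L r s : ℕ) (hL : 2 * s + r + 1 ≤ L)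
    (C : Set (Fin L → ZMod 2)) (hC : IsPPRIC L s r C)
    (v : Fin L → ZMod 2)
    (hv : ∀ c ∈ C, ∃ i : Fin L, v i ≠ 0 ∧ c i ≠ 0) :
    r + 3 ≤ hammingNorm v := by
  by_contra! hv_small
  obtain ⟨w, hvw, hw⟩ := exists_support_superset_hammingNorm_eq v
    (le_max_left (hammingNorm v) (r + 1))
    (max_le hammingNorm_le_card_fintype (by simp; omega))
  have hw_near : ∀ c ∈ C, hammingDist c w ≤ r + s := fun c hc => by
    obtain ⟨i, hvi, hci⟩ := hv c hc
    have hcommon : 1 ≤ #{i | c i ≠ 0 ∧ w i ≠ 0} :=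
      card_pos.2 ⟨i, by simp [hci, hvw i hvi]⟩
    have hdist := hammingDist_add_two_mul_card_common_support c w
    rw [hC.1 c hc] at hdist
    omega
  have := hC.hammingNorm_le_of_forall_hammingDist_le hw_near
  omega

theorem stmt1 (L r s : ℕ) (hs : 1 ≤ s) (hL : 2 * s + r + 1 ≤ L)
    (C : Set (Fin L → ZMod 2)) (hC : IsPPRIC L s r C)
    (v : Fin L → ZMod 2)
    (hv : ∀ c ∈ C, ∃ i : Fin L, v i ≠ 0 ∧ c i ≠ 0) :
    r + 3 ≤ hammingNorm v :=
  stmt1_general L r s hL C hC v hv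
end

section
/- Let r, s, L be nonnegative integers with s ≥ 1 and L ≥ 2s + r + 1, let C be an (L,s,r) PPRIC code, and set σ = s/L. Then for every integer k with 0 ≤ k ≤ r + 1, it holds that (|C| : ℝ) ≥ (r + 3 − k) / (1 − σ)^k. -/
/-!
Write `F(P)` for the codewords vanishing on a coordinate set `P`. If `y` is the indicator of
`r + 2` coordinates, then `y ∉ B(0, r)`, so some codeword `c` has `d(c, y) > r + s`; this forces
`c` and `y` to have disjoint supports. Hence every set of at most `r + 2` coordinates is avoided
by a codeword, which gives `|F(P)| + |P| ≥ r + 3`. On the other hand, each word of `F(P)` has its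
`s` support points outside `P`, so by double counting some `x ∉ P` lies in the support of at least
a fraction `σ = s / L` of `F(P)`, and `|F(P ∪ {x})| ≤ (1 - σ) |F(P)|`. Iterating `k` times yields
`P` with `|P| = k` and `r + 3 - k ≤ |F(P)| ≤ (1 - σ)^k |C|`.
-/

open Finset

section VanishingOn

variable {ι β : Type*} [Fintype ι] [DecidableEq ι] [Zero β] [DecidableEq β]

def vanishingOn (C : Finset (ι → β)) (P : Finset ι) : Finset (ι → β) :=
  C.filter fun c => ∀ i ∈ P, c i = 0

variable {C : Finset (ι → β)} {P : Finset ι}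

lemma mem_vanishingOn {c : ι → β} : c ∈ vanishingOn C P ↔ c ∈ C ∧ ∀ i ∈ P, c i = 0 :=
  mem_filter

lemma vanishingOn_empty : vanishingOn C ∅ = C := by
  simp [vanishingOn]

lemma vanishingOn_insert (x : ι) :
    vanishingOn C (insert x P) = (vanishingOn C P).filter fun c => c x = 0 := by
  simp only [vanishingOn, filter_filter, forall_mem_insert, and_comm]

lemma card_vanishingOn_insert_add_card_filter (x : ι) :
    #(vanishingOn C (insert x P)) + #{c ∈ vanishingOn C P | c x ≠ 0} = #(vanishingOn C P) := by
  rw [vanishingOn_insert]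
  exact card_filter_add_card_filter_not _

lemma sum_card_filter_ne_zero_vanishingOn {s : ℕ} (hC : ∀ c ∈ C, hammingNorm c = s) :
    ∑ x ∈ Pᶜ, #{c ∈ vanishingOn C P | c x ≠ 0} = s * #(vanishingOn C P) := by
  have hsupp : ∀ c ∈ vanishingOn C P, #{x ∈ Pᶜ | c x ≠ 0} = s := by
    intro c hc
    rw [mem_vanishingOn] at hc
    rw [← hC c hc.1, hammingNorm]
    congr 1
    ext x
    simp only [mem_filter, mem_compl, mem_univ, true_and, and_iff_right_iff_imp]
    exact fun hx hxP => hx (hc.2 x hxP)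
  calc ∑ x ∈ Pᶜ, #{c ∈ vanishingOn C P | c x ≠ 0}
      = ∑ c ∈ vanishingOn C P, #{x ∈ Pᶜ | c x ≠ 0} := by
        simp only [card_eq_sum_ones, sum_filter]
        exact sum_comm
    _ = s * #(vanishingOn C P) := by
        rw [sum_congr rfl hsupp, sum_const, smul_eq_mul, mul_comm]

lemma exists_card_vanishingOn_insert_le {s : ℕ} (hC : ∀ c ∈ C, hammingNorm c = s)
    (hP : #P < Fintype.card ι) :
    ∃ x ∉ P, (#(vanishingOn C (insert x P)) : ℝ)
      ≤ (1 - s / Fintype.card ι) * #(vanishingOn C P) := by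
  set n := Fintype.card ι
  obtain ⟨x, hxP, hx⟩ : ∃ x ∈ Pᶜ,
      s * #(vanishingOn C P) ≤ #Pᶜ * #{c ∈ vanishingOn C P | c x ≠ 0} := by
    refine exists_le_of_sum_le (by rw [← card_pos, card_compl]; omega) ?_
    rw [sum_const, smul_eq_mul, ← mul_sum, sum_card_filter_ne_zero_vanishingOn hC]
  refine ⟨x, mem_compl.1 hxP, ?_⟩
  have hsplit := card_vanishingOn_insert_add_card_filter (C := C) (P := P) x
  have hnat : n * #(vanishingOn C (insert x P)) + s * #(vanishingOn C P)
      ≤ n * #(vanishingOn C P) := by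
    calc _ ≤ n * #(vanishingOn C (insert x P)) + n * #{c ∈ vanishingOn C P | c x ≠ 0} := by
          exact Nat.add_le_add_left (hx.trans (Nat.mul_le_mul_right _ (card_le_univ _))) _
      _ = n * #(vanishingOn C P) := by rw [← mul_add, hsplit]
  have hn : (0 : ℝ) < n := by exact_mod_cast hP.trans_le' (Nat.zero_le _)
  rw [one_sub_div hn.ne', div_mul_eq_mul_div, le_div_iff₀ hn]
  have : (n : ℝ) * #(vanishingOn C (insert x P)) + s * #(vanishingOn C P)
      ≤ n * #(vanishingOn C P) := by exact_mod_cast hnat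
  linarith

lemma exists_card_vanishingOn_le_pow {s : ℕ} (hC : ∀ c ∈ C, hammingNorm c = s)
    (hs : s ≤ Fintype.card ι) {k : ℕ} (hk : k ≤ Fintype.card ι) :
    ∃ P : Finset ι, #P = k ∧
      (#(vanishingOn C P) : ℝ) ≤ (1 - s / Fintype.card ι) ^ k * #C := by
  induction k with
  | zero => exact ⟨∅, rfl, by simp [vanishingOn_empty]⟩
  | succ k ih =>
    obtain ⟨P, rfl, hP⟩ := ih (by omega)
    obtain ⟨x, hxP, hx⟩ := exists_card_vanishingOn_insert_le hC (P := P) (by omega)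
    refine ⟨insert x P, card_insert_of_notMem hxP, ?_⟩
    have hσ : 0 ≤ 1 - (s : ℝ) / Fintype.card ι :=
      sub_nonneg.2 (div_le_one_of_le₀ (by exact_mod_cast hs) (by positivity))
    calc _ ≤ (1 - (s : ℝ) / Fintype.card ι) * #(vanishingOn C P) := hx
      _ ≤ (1 - (s : ℝ) / Fintype.card ι) * ((1 - s / Fintype.card ι) ^ #P * #C) := by gcongr
      _ = _ := by ring

end VanishingOn

lemma hammingDist_add_two_le {ι β : Type*} [Fintype ι] [DecidableEq ι] [Zero β] [DecidableEq β]
    {x y : ι → β} {j : ι} (hxy : x j = y j) (hx : x j ≠ 0) :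
    hammingDist x y + 2 ≤ hammingNorm x + hammingNorm y := by
  set X := univ.filter (x · ≠ 0)
  set Y := univ.filter (y · ≠ 0)
  have hsub : univ.filter (fun i => x i ≠ y i) ⊆ (X ∪ Y).erase j := by
    intro i
    simp only [X, Y, mem_filter, mem_univ, true_and, mem_erase, mem_union]
    exact fun hi => ⟨by rintro rfl; exact hi hxy, by by_contra! h; exact hi (h.1.trans h.2.symm)⟩
  have hj : j ∈ X ∩ Y := by
    simp only [X, Y, mem_inter, mem_filter, mem_univ, true_and]
    exact ⟨hx, hxy ▸ hx⟩
  have hunion := card_union_add_card_inter X Y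
  have herase := card_erase_add_one (mem_union_left Y (mem_inter.1 hj).1)
  have hdist := card_le_card hsub
  have hinter := card_pos.2 ⟨j, hj⟩
  change #(univ.filter fun i => x i ≠ y i) + 2 ≤ #X + #Y
  omega

lemma IsPPRIC.exists_mem_vanishingOn {L s r : ℕ} {C : Finset (Fin L → ZMod 2)}
    (hC : IsPPRIC L s r ↑C) (hL : r + 2 ≤ L) {T : Finset (Fin L)} (hT : #T ≤ r + 2) :
    (vanishingOn C T).Nonempty := by
  obtain ⟨T', hTT', hT'⟩ := exists_superset_card_eq hT (by simpa using hL)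
  let y : Fin L → ZMod 2 := fun i => if i ∈ T' then 1 else 0
  have hy : hammingNorm y = r + 2 := by
    rw [← hT', hammingNorm]
    congr 1
    ext i
    by_cases hi : i ∈ T' <;> simp [y, hi]
  have hyC : y ∉ ⋂ c ∈ (C : Set (Fin L → ZMod 2)), pball L c (r + s) := by
    rw [← hC.2]
    simp [pball, hy]
  simp only [Set.mem_iInter, not_forall, pball, Set.mem_ofPred_eq, not_le, mem_coe] at hyC
  obtain ⟨c, hc, hcy⟩ := hyC
  refine ⟨c, mem_vanishingOn.2 ⟨hc, fun i hi => ?_⟩⟩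
  by_contra hci
  have hdist := hammingDist_add_two_le (y := y)
    ((Fin.eq_one_of_ne_zero _ hci).trans (by simp [y, hTT' hi])) hci
  rw [hC.1 c hc, hy] at hdist
  omega

lemma IsPPRIC.le_card_vanishingOn_add_card {L s r : ℕ} {C : Finset (Fin L → ZMod 2)}
    (hC : IsPPRIC L s r ↑C) (hs : 1 ≤ s) (hL : r + 2 ≤ L) (P : Finset (Fin L)) :
    r + 3 ≤ #(vanishingOn C P) + #P := by
  by_contra! h
  have hsupp : ∀ c ∈ C, ∃ i, c i ≠ 0 := by
    intro c hc
    have hc0 : c ≠ 0 := hammingNorm_pos_iff.1 (by rw [hC.1 c hc]; omega)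
    simpa [Function.ne_iff] using hc0
  have : Nonempty (Fin L) := Fin.pos_iff_nonempty.1 (by omega)
  -- `P` plus one support point of each codeword vanishing on `P` is avoided by no codeword.
  choose! f hf using hsupp
  obtain ⟨c, hc⟩ := hC.exists_mem_vanishingOn hL (T := P ∪ (vanishingOn C P).image f) <|
    (card_union_le _ _).trans (by have := card_image_le (s := vanishingOn C P) (f := f); omega)
  rw [mem_vanishingOn] at hc
  have hcP : c ∈ vanishingOn C P :=
    mem_vanishingOn.2 ⟨hc.1, fun i hi => hc.2 i (mem_union_left _ hi)⟩
  exact hf c hc.1 (hc.2 _ (mem_union_right _ (mem_image_of_mem f hcP)))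

theorem stmt3 (L r s : ℕ) (hs : 1 ≤ s) (hL : 2 * s + r + 1 ≤ L)
    (C : Finset (Fin L → ZMod 2)) (hC : IsPPRIC L s r ↑C)
    (k : ℕ) (hk : k ≤ r + 1) :
    ((r : ℝ) + 3 - (k : ℝ)) / (1 - (s : ℝ) / (L : ℝ)) ^ k ≤ (C.card : ℝ) := by
  obtain ⟨P, rfl, hP⟩ := exists_card_vanishingOn_le_pow hC.1 (s := s)
    (by simp only [Fintype.card_fin]; omega) (k := k) (by simp only [Fintype.card_fin]; omega)
  rw [Fintype.card_fin] at hP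
  have hcover : (r : ℝ) + 3 ≤ #(vanishingOn C P) + #P := by
    exact_mod_cast hC.le_card_vanishingOn_add_card hs (by omega) P
  have hσ : 0 < 1 - (s : ℝ) / L := by
    rw [sub_pos, div_lt_one (by exact_mod_cast (by omega : 0 < L))]
    exact_mod_cast (by omega : s < L)
  rw [div_le_iff₀ (pow_pos hσ _)]
  linarith
end

section
/- Let r, s, L be nonnegative integers with s ≥ 1 and L ≥ 2s + r + 1, and let C be an (L,s,r) PPRIC code. Then the family { [L] \ supp(c) : c ∈ C } of complements of supports of codewords of C is an (L, L−s, r+2) covering design; that is, each set [L] \ supp(c) has L−s elements and every (r+2)-element subset of [L] is contained in [L] \ supp(c) for at least one c ∈ C. -/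
/-- The support of a word, as a finset of coordinates. -/
def psupp (L : ℕ) (v : Fin L → ZMod 2) : Finset (Fin L) :=
  Finset.univ.filter (fun i => v i ≠ 0)

open Finset
open scoped symmDiff

lemma Finset.card_symmDiff_add_two_mul_card_inter {α : Type*} [DecidableEq α] (s t : Finset α) :
    #(s ∆ t) + 2 * #(s ∩ t) = #s + #t := by
  rw [symmDiff_def, sup_eq_union, card_union_of_disjoint disjoint_sdiff_sdiff]
  have hs := card_sdiff_add_card_inter s t
  have ht := card_sdiff_add_card_inter t s
  rw [inter_comm t s] at ht
  omega

lemma hammingNorm_eq_card_psupp {L : ℕ} (v : Fin L → ZMod 2) : hammingNorm v = #(psupp L v) :=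
  rfl

lemma hammingDist_eq_card_symmDiff_psupp {L : ℕ} (x y : Fin L → ZMod 2) :
    hammingDist x y = #(psupp L x ∆ psupp L y) := by
  have hbin : ∀ a b : ZMod 2, a ≠ b ↔ (a ≠ 0 ∧ b = 0) ∨ (b ≠ 0 ∧ a = 0) := by decide
  unfold hammingDist psupp
  congr 1
  ext i
  simp only [mem_filter, mem_univ, true_and, mem_symmDiff, not_not]
  exact hbin _ _

lemma psupp_indicator {L : ℕ} (T : Finset (Fin L)) :
    psupp L (fun i => if i ∈ T then 1 else 0) = T := by
  ext i
  by_cases hi : i ∈ T <;> simp [psupp, hi]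

lemma IsPPRIC.exists_lt_hammingDist {L s r : ℕ} {C : Set (Fin L → ZMod 2)} (hC : IsPPRIC L s r C)
    {y : Fin L → ZMod 2} (hy : r < hammingNorm y) : ∃ c ∈ C, r + s < hammingDist c y := by
  have hy_out : y ∉ ⋂ c ∈ C, pball L c (r + s) := by
    rw [← hC.2]
    simpa [pball, hammingDist_zero_left] using hy
  simpa [pball] using hy_out

lemma IsPPRIC.exists_disjoint_psupp {L s r : ℕ} {C : Set (Fin L → ZMod 2)} (hC : IsPPRIC L s r C)
    (T : Finset (Fin L)) (hT : #T = r + 2) : ∃ c ∈ C, Disjoint (psupp L c) T := by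
  set y : Fin L → ZMod 2 := fun i => if i ∈ T then 1 else 0
  have hy : psupp L y = T := psupp_indicator T
  obtain ⟨c, hc, hfar⟩ := hC.exists_lt_hammingDist (y := y) (by rw [hammingNorm_eq_card_psupp, hy]; omega)
  refine ⟨c, hc, disjoint_iff_inter_eq_empty.2 (card_eq_zero.1 ?_)⟩
  have hcs : #(psupp L c) = s := hC.1 c hc
  have hcount := card_symmDiff_add_two_mul_card_inter (psupp L c) T
  rw [hammingDist_eq_card_symmDiff_psupp, hy] at hfar
  omega

theorem stmt4_general (L r s : ℕ)
    (C : Set (Fin L → ZMod 2)) (hC : IsPPRIC L s r C) :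
    (∀ c ∈ C, ((psupp L c)ᶜ).card = L - s) ∧
    (∀ T : Finset (Fin L), T.card = r + 2 → ∃ c ∈ C, T ⊆ (psupp L c)ᶜ) := by
  refine ⟨fun c hc => ?_, fun T hT => ?_⟩
  · rw [card_compl, ← hammingNorm_eq_card_psupp, hC.1 c hc, Fintype.card_fin]
  · obtain ⟨c, hc, hdisj⟩ := hC.exists_disjoint_psupp T hT
    exact ⟨c, hc, subset_compl_iff_disjoint_right.2 hdisj.symm⟩

theorem stmt4 (L r s : ℕ) (hs : 1 ≤ s) (hL : 2 * s + r + 1 ≤ L)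
    (C : Set (Fin L → ZMod 2)) (hC : IsPPRIC L s r C) :
    (∀ c ∈ C, ((psupp L c)ᶜ).card = L - s) ∧
    (∀ T : Finset (Fin L), T.card = r + 2 → ∃ c ∈ C, T ⊆ (psupp L c)ᶜ) :=
  stmt4_general L r s C hC
end

section
/- Let r, s, L be nonnegative integers with s ≥ 1 and L ≥ 2s + r + 1. Then for every (L,s,r) PPRIC code C, |C| ≥ c(L, L−s, r+2), where c(L, L−s, r+2) denotes the minimum number of blocks in an (L, L−s, r+2) covering design. -/
/-- `S` is an `(n,k,t)` covering design: a collection of `k`-element blocks of an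
`n`-set such that every `t`-element subset is contained in at least one block. -/
def IsCoveringDesign (n k t : ℕ) (S : Finset (Finset (Fin n))) : Prop :=
  (∀ B ∈ S, B.card = k) ∧
  ∀ T : Finset (Fin n), T.card = t → ∃ B ∈ S, T ⊆ B

/-!
The complements of the supports of the codewords form an `(L, L-s, r+2)` covering design of
size `|C|`: the word supported on an `(r+2)`-set `T` lies outside `B(0,r)`, hence outside some
`B(c, r+s)`, and over `𝔽₂` this forces `supp c` to miss `T`.
-/

open Finset

namespace BinaryWord

variable {ι : Type*} [Fintype ι]

def support (x : ι → ZMod 2) : Finset ι := {i | x i ≠ 0}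

def ofFinset [DecidableEq ι] (T : Finset ι) : ι → ZMod 2 := fun i => if i ∈ T then 1 else 0

@[simp] lemma mem_support {x : ι → ZMod 2} {i : ι} : i ∈ support x ↔ x i ≠ 0 := by
  simp [support]

lemma card_support (x : ι → ZMod 2) : #(support x) = hammingNorm x := rfl

@[simp] lemma support_ofFinset [DecidableEq ι] (T : Finset ι) : support (ofFinset T) = T := by
  ext i; by_cases h : i ∈ T <;> simp [ofFinset, h]

lemma support_injective : Function.Injective (support : (ι → ZMod 2) → Finset ι) := by
  intro x y h
  funext i
  have hi : x i ≠ 0 ↔ y i ≠ 0 := by rw [← mem_support, ← mem_support, h]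
  revert hi; generalize x i = a; generalize y i = b; revert a b; decide

lemma hammingDist_add_two_mul_card_inter (x y : ι → ZMod 2) :
    hammingDist x y + 2 * #{i | x i ≠ 0 ∧ y i ≠ 0} = hammingNorm x + hammingNorm y := by
  simp only [hammingDist, hammingNorm, card_filter, mul_sum, ← sum_add_distrib]
  refine sum_congr rfl fun i _ => ?_
  have coord : ∀ a b : ZMod 2, ((if a ≠ b then 1 else 0) + 2 * if a ≠ 0 ∧ b ≠ 0 then 1 else 0) =
      (if a ≠ 0 then 1 else 0) + if b ≠ 0 then 1 else 0 := by decide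
  exact coord _ _

lemma hammingNorm_ofFinset [DecidableEq ι] (T : Finset ι) : hammingNorm (ofFinset T) = #T := by
  rw [← card_support, support_ofFinset]

end BinaryWord

open BinaryWord

namespace IsPPRIC

variable {L s r : ℕ}

/-- A codeword meeting `T` is within distance `s + (r + 2) - 2` of the word supported on `T`. -/
lemma exists_disjoint_support {C : Set (Fin L → ZMod 2)} (hC : IsPPRIC L s r C)
    (T : Finset (Fin L)) (hT : #T = r + 2) : ∃ c ∈ C, Disjoint (support c) T := by
  have hfar : ofFinset T ∉ pball L 0 r := by
    simp [pball, hammingNorm_ofFinset, hT]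
  rw [hC.2] at hfar
  simp only [Set.mem_iInter, not_forall] at hfar
  obtain ⟨c, hc, hcfar⟩ := hfar
  refine ⟨c, hc, Finset.disjoint_left.2 fun i hic hiT => hcfar ?_⟩
  have hmeet : 0 < #{j | c j ≠ 0 ∧ ofFinset T j ≠ 0} :=
    card_pos.2 ⟨i, by simp_all [ofFinset]⟩
  have hsum := hammingDist_add_two_mul_card_inter c (ofFinset T)
  rw [hC.1 c hc, hammingNorm_ofFinset, hT] at hsum
  simp only [pball, Set.mem_ofPred_eq]
  omega

lemma isCoveringDesign_image_compl_support {C : Finset (Fin L → ZMod 2)}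
    (hC : IsPPRIC L s r C) :
    IsCoveringDesign L (L - s) (r + 2) (C.image fun c => (support c)ᶜ) := by
  refine ⟨?_, fun T hT => ?_⟩
  · simp only [mem_image, forall_exists_index, and_imp]
    rintro _ c hc rfl
    rw [card_compl, card_support, hC.1 c hc, Fintype.card_fin]
  · obtain ⟨c, hc, hdisj⟩ := hC.exists_disjoint_support T hT
    exact ⟨_, mem_image_of_mem _ hc, subset_compl_iff_disjoint_left.2 hdisj⟩

end IsPPRIC

theorem stmt5_general (L r s : ℕ)
    (C : Finset (Fin L → ZMod 2)) (hC : IsPPRIC L s r ↑C) :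
    sInf {m : ℕ | ∃ S : Finset (Finset (Fin L)),
        IsCoveringDesign L (L - s) (r + 2) S ∧ S.card = m} ≤ C.card :=
  Nat.sInf_le ⟨_, hC.isCoveringDesign_image_compl_support,
    card_image_of_injective _ (compl_injective.comp support_injective)⟩

theorem stmt5 (L r s : ℕ) (hs : 1 ≤ s) (hL : 2 * s + r + 1 ≤ L)
    (C : Finset (Fin L → ZMod 2)) (hC : IsPPRIC L s r ↑C) :
    sInf {m : ℕ | ∃ S : Finset (Finset (Fin L)),
        IsCoveringDesign L (L - s) (r + 2) S ∧ S.card = m} ≤ C.card :=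
  stmt5_general L r s C hC
end

section
/- Let r, s, L be nonnegative integers with s ≥ 1, L ≥ 2s + r + 1 and L ≥ (r+3)s. Then the minimum possible number of codewords of an (L,s,r) PPRIC code equals r + 3; that is, there exists an (L,s,r) PPRIC code of size r + 3, and every (L,s,r) PPRIC code has size at least r + 3. -/
/-!
Over `𝔽₂` one has `d(c, y) = wt c + wt y - 2 |supp c ∩ supp y|`, and every word of weight `s`
contains `B(0, r)` in its ball of radius `r + s`. If `|C| ≤ r + 2`, a word of weight `r + 2`
meeting the support of every codeword is within `r + s` of all of them but outside `B(0, r)`.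
Conversely, take `r + 3` codewords with pairwise disjoint supports: a word of weight `w ≥ r + 1`
meets one of these supports in `k ≤ w / (r + 3)` positions, and its distance `s + w - 2k` to that
codeword exceeds `r + s`.
-/

open Finset Function

variable {ι : Type*}

section ZMod2Words

variable [Fintype ι] [DecidableEq ι]

def wordSupport (x : ι → ZMod 2) : Finset ι := {i | x i ≠ 0}

omit [DecidableEq ι] in
theorem card_wordSupport (x : ι → ZMod 2) : #(wordSupport x) = hammingNorm x := rfl

theorem hammingDist_add_two_mul_card_inter (x y : ι → ZMod 2) :
    hammingDist x y + 2 * #(wordSupport x ∩ wordSupport y) = hammingNorm x + hammingNorm y := by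
  have hcoord : ∀ a b : ZMod 2, (if a ≠ b then 1 else 0) + 2 * (if a ≠ 0 ∧ b ≠ 0 then 1 else 0)
      = (if a ≠ 0 then 1 else 0) + (if b ≠ 0 then 1 else 0) := by decide
  simp only [hammingDist, hammingNorm, wordSupport, ← filter_and, card_filter, mul_sum,
    ← sum_add_distrib, hcoord]

theorem hammingDist_add_two_le_of_inter_nonempty {x y : ι → ZMod 2}
    (h : (wordSupport x ∩ wordSupport y).Nonempty) :
    hammingDist x y + 2 ≤ hammingNorm x + hammingNorm y := by
  have := hammingDist_add_two_mul_card_inter x y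
  have := h.card_pos
  omega

def indicatorWord (A : Finset ι) : ι → ZMod 2 := fun i => if i ∈ A then 1 else 0

theorem wordSupport_indicatorWord (A : Finset ι) : wordSupport (indicatorWord A) = A := by
  ext i
  by_cases hi : i ∈ A <;> simp [wordSupport, indicatorWord, hi]

theorem hammingNorm_indicatorWord (A : Finset ι) : hammingNorm (indicatorWord A) = #A := by
  rw [← card_wordSupport, wordSupport_indicatorWord]

theorem indicatorWord_injective : Injective (indicatorWord : Finset ι → ι → ZMod 2) :=
  fun A B h => by rw [← wordSupport_indicatorWord A, h, wordSupport_indicatorWord]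

end ZMod2Words

theorem exists_card_eq_forall_inter_nonempty [Fintype ι] [DecidableEq ι] {α : Type*}
    {C : Finset α} (A : α → Finset ι) (hA : ∀ c ∈ C, (A c).Nonempty) {m : ℕ} (hCm : #C ≤ m)
    (hm : m ≤ Fintype.card ι) : ∃ Y : Finset ι, #Y = m ∧ ∀ c ∈ C, (A c ∩ Y).Nonempty := by
  choose f hf using hA
  have hT : #(C.attach.image fun c => f c.1 c.2) ≤ m :=
    card_image_le.trans (card_attach.trans_le hCm)
  obtain ⟨Y, hTY, hY⟩ := exists_superset_card_eq hT hm
  exact ⟨Y, hY, fun c hc =>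
    ⟨f c hc, mem_inter.2 ⟨hf c hc, hTY (mem_image_of_mem _ (mem_attach _ ⟨c, hc⟩))⟩⟩⟩

theorem exists_pairwise_disjoint_card_eq [Fintype ι] {n s : ℕ} (h : n * s ≤ Fintype.card ι) :
    ∃ B : Fin n → Finset ι, (∀ j, #(B j) = s) ∧ Pairwise (Disjoint on B) := by
  obtain ⟨e⟩ := Embedding.nonempty_of_card_le (α := Fin n × Fin s) (β := ι) (by simpa)
  refine ⟨fun j => univ.map ⟨fun k => e (j, k), fun k k' h => (Prod.ext_iff.1 (e.injective h)).2⟩,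
    fun j => by simp, fun j j' hjj' => ?_⟩
  simp only [onFun, disjoint_left, mem_map, mem_univ, true_and, not_exists, forall_exists_index]
  rintro _ k rfl k' h
  exact hjj' (Prod.ext_iff.1 (e.injective h)).1.symm

theorem exists_mul_card_inter_le [DecidableEq ι] {n : ℕ} [NeZero n] (B : Fin n → Finset ι)
    (hB : Pairwise (Disjoint on B)) (S : Finset ι) : ∃ j, n * #(S ∩ B j) ≤ #S := by
  have hsum : ∑ j, #(S ∩ B j) ≤ #S := by
    rw [← card_biUnion]
    · exact card_le_card (biUnion_subset.2 fun j _ => inter_subset_left)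
    · exact fun j _ j' _ hjj' => (hB hjj').mono inter_subset_right inter_subset_right
  obtain ⟨j, -, hj⟩ := exists_le_of_sum_le (s := univ) (f := fun j => n * #(S ∩ B j))
    (g := fun _ => #S) univ_nonempty (by simpa [← mul_sum] using Nat.mul_le_mul_left n hsum)
  exact ⟨j, hj⟩

section PPRIC

variable {L s r : ℕ}

theorem pball_zero_subset_pball {c : Fin L → ZMod 2} (hc : hammingNorm c = s) :
    pball L 0 r ⊆ pball L c (r + s) := fun y (hy : hammingDist 0 y ≤ r) =>
  calc hammingDist c y ≤ hammingDist c 0 + hammingDist 0 y := hammingDist_triangle _ _ _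
    _ ≤ r + s := by rw [hammingDist_zero_right, hc]; omega

theorem IsPPRIC.add_three_le_card {C : Finset (Fin L → ZMod 2)} (hC : IsPPRIC L s r C)
    (hs : 1 ≤ s) (hL : r + 2 ≤ L) : r + 3 ≤ #C := by
  obtain ⟨hwt, hball⟩ := hC
  by_contra! hCr
  obtain ⟨Y, hY, hYC⟩ := exists_card_eq_forall_inter_nonempty wordSupport
    (fun c hc => card_pos.1 (by rw [card_wordSupport, hwt c hc]; omega))
    (by omega : #C ≤ r + 2) (by simpa using hL)
  have hfar : indicatorWord Y ∉ pball L 0 r := by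
    simp [pball, hammingDist_zero_left, hammingNorm_indicatorWord, hY]
  refine hfar (hball ▸ Set.mem_iInter₂.2 fun c hc => ?_)
  have hclose := hammingDist_add_two_le_of_inter_nonempty
    (x := c) (y := indicatorWord Y) (by rw [wordSupport_indicatorWord]; exact hYC c hc)
  rw [hwt c hc, hammingNorm_indicatorWord, hY] at hclose
  simp only [pball, Set.mem_ofPred_eq]
  omega

theorem isPPRIC_image_indicatorWord {n : ℕ} (B : Fin n → Finset (Fin L)) (hB : ∀ j, #(B j) = s)
    (hdisj : Pairwise (Disjoint on B)) (hn : r + 3 ≤ n) :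
    IsPPRIC L s r ↑(univ.image (indicatorWord ∘ B)) := by
  have hwt : ∀ c ∈ univ.image (indicatorWord ∘ B), hammingNorm c = s := by
    simp [hammingNorm_indicatorWord, hB]
  refine ⟨fun c hc => hwt c hc, Set.Subset.antisymm
    (Set.subset_iInter₂ fun c hc => pball_zero_subset_pball (hwt c hc)) fun y hy => ?_⟩
  by_contra hfar
  simp only [pball, Set.mem_ofPred_eq, hammingDist_zero_left, not_le] at hfar
  have : NeZero n := ⟨by omega⟩
  obtain ⟨j, hj⟩ := exists_mul_card_inter_le B hdisj (wordSupport y)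
  rw [card_wordSupport] at hj
  have hyj : hammingDist (indicatorWord (B j)) y ≤ r + s := Set.mem_iInter₂.1 hy _ (by simp)
  have hdist := hammingDist_add_two_mul_card_inter (indicatorWord (B j)) y
  rw [wordSupport_indicatorWord, hammingNorm_indicatorWord, hB, inter_comm] at hdist
  rcases Nat.eq_zero_or_pos #(wordSupport y ∩ B j) with hk | hk <;> nlinarith

theorem card_image_indicatorWord {n : ℕ} {B : Fin n → Finset (Fin L)} (hB : ∀ j, #(B j) = s)
    (hdisj : Pairwise (Disjoint on B)) (hs : 1 ≤ s) : #(univ.image (indicatorWord ∘ B)) = n := by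
  rw [card_image_of_injective _ (indicatorWord_injective.comp fun j j' hjj' => ?_), card_fin]
  by_contra hne
  have hempty := hdisj hne
  rw [onFun, ← hjj', disjoint_self_iff_empty] at hempty
  have := hB j
  rw [hempty, card_empty] at this
  omega

end PPRIC

theorem stmt9_general (L r s : ℕ) (hs : 1 ≤ s)
    (hL2 : (r + 3) * s ≤ L) :
    (∃ C : Finset (Fin L → ZMod 2), IsPPRIC L s r ↑C ∧ C.card = r + 3) ∧
    (∀ C : Finset (Fin L → ZMod 2), IsPPRIC L s r ↑C → r + 3 ≤ C.card) := by
  obtain ⟨B, hB, hdisj⟩ :=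
    exists_pairwise_disjoint_card_eq (ι := Fin L) (n := r + 3) (by simpa using hL2)
  exact ⟨⟨_, isPPRIC_image_indicatorWord B hB hdisj le_rfl, card_image_indicatorWord hB hdisj hs⟩,
    fun C hC => hC.add_three_le_card hs (by nlinarith)⟩

theorem stmt9 (L r s : ℕ) (hs : 1 ≤ s) (hL1 : 2 * s + r + 1 ≤ L)
    (hL2 : (r + 3) * s ≤ L) :
    (∃ C : Finset (Fin L → ZMod 2), IsPPRIC L s r ↑C ∧ C.card = r + 3) ∧
    (∀ C : Finset (Fin L → ZMod 2), IsPPRIC L s r ↑C → r + 3 ≤ C.card) :=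
  stmt9_general L r s hs hL2
end

section
/- Let s, L₁, L₂, t₁, t₂ be integers with L₁ > L₁ − s > t₁ > 0 and L₂ > L₂ − s > t₂ > 0. If S₁ is an (L₁, L₁−s, t₁) covering design and S₂ is an (L₂, L₂−s, t₂) covering design, then there exists an (L₁ + L₂, s, t₁ + t₂ − 1) PPRIC code with at most |S₁| + |S₂| codewords. -/
/-!
Each block `B` of `S₁` yields the codeword `1_{Bᶜ} ⊕ 0` of weight `s`, and each block of `S₂`
yields `0 ⊕ 1_{Bᶜ}`. For binary words, `d(1_A, y) = |A| + wt y - 2 |A ∩ supp y|`, so `y` is far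
from `1_{Bᶜ}` when most of its support lies inside `B`. The covering property puts
`min(tᵢ, wᵢ)` of the `wᵢ` support points of `y` on the `i`-th half inside one block; if
`wt y ≥ t₁ + t₂`, choosing the half where `wᵢ - tᵢ` is smaller gives `d(c, y) ≥ s + t₁ + t₂`.
The inclusion `B(0, r) ⊆ B(c, r + s)` is the triangle inequality.
-/

open Finset

section finAppend

variable {m n : ℕ} {β : Type*} [DecidableEq β]

theorem hammingDist_append (x₁ : Fin m → β) (x₂ : Fin n → β) (y : Fin (m + n) → β) :
    hammingDist (Fin.append x₁ x₂) y =
      hammingDist x₁ (fun i => y (Fin.castAdd n i)) +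
        hammingDist x₂ (fun i => y (Fin.natAdd m i)) := by
  simp only [hammingDist, card_filter, Fin.sum_univ_add, Fin.append_left, Fin.append_right]

theorem hammingNorm_append [Zero β] (x₁ : Fin m → β) (x₂ : Fin n → β) :
    hammingNorm (Fin.append x₁ x₂) = hammingNorm x₁ + hammingNorm x₂ := by
  simp only [hammingNorm, card_filter, Fin.sum_univ_add, Fin.append_left, Fin.append_right]

end finAppend

def indicatorVec {ι : Type*} [DecidableEq ι] (A : Finset ι) : ι → ZMod 2 :=
  fun i => if i ∈ A then 1 else 0

section indicatorVec

variable {ι : Type*} [Fintype ι] [DecidableEq ι]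

theorem hammingNorm_indicatorVec (A : Finset ι) : hammingNorm (indicatorVec A) = #A := by
  simp [hammingNorm, indicatorVec]

theorem hammingDist_indicatorVec_add (A : Finset ι) (y : ι → ZMod 2) :
    hammingDist (indicatorVec A) y + 2 * #{i ∈ A | y i ≠ 0} = #A + hammingNorm y := by
  have hA : #A = #{i | i ∈ A} := by rw [filter_univ_mem]
  have hAy : #{i ∈ A | y i ≠ 0} = #{i | i ∈ A ∧ y i ≠ 0} := by
    rw [← filter_filter, filter_univ_mem]
  rw [hA, hAy]
  simp only [hammingDist, hammingNorm, card_filter, mul_sum, ← sum_add_distrib]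
  refine sum_congr rfl fun i _ => ?_
  unfold indicatorVec
  generalize y i = a
  obtain rfl | rfl : a = 0 ∨ a = 1 := by revert a; decide
  all_goals by_cases hi : i ∈ A <;> simp [hi]

end indicatorVec

namespace IsCoveringDesign

variable {n k t : ℕ} {S : Finset (Finset (Fin n))}

theorem exists_min_le_card_inter (hS : IsCoveringDesign n k t S) (ht : t ≤ n)
    (P : Finset (Fin n)) : ∃ B ∈ S, min t #P ≤ #(P ∩ B) := by
  obtain ⟨T, hT, hTcard⟩ : ∃ T : Finset (Fin n), (T ⊆ P ∨ P ⊆ T) ∧ #T = t := by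
    rcases le_total t #P with htP | hPt
    · obtain ⟨T, hTP, hT⟩ := exists_subset_card_eq htP
      exact ⟨T, .inl hTP, hT⟩
    · obtain ⟨T, hPT, hT⟩ := exists_superset_card_eq hPt (by simpa using ht)
      exact ⟨T, .inr hPT, hT⟩
  obtain ⟨B, hB, hTB⟩ := hS.2 T hTcard
  refine ⟨B, hB, ?_⟩
  rcases hT with hTP | hPT
  · exact (min_le_left _ _).trans (hTcard ▸ card_le_card (subset_inter hTP hTB))
  · exact (min_le_right _ _).trans (card_le_card (subset_inter subset_rfl (hPT.trans hTB)))

theorem exists_far_indicatorVec_compl (hS : IsCoveringDesign n k t S) (ht : t ≤ n)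
    (y : Fin n → ZMod 2) :
    ∃ B ∈ S, n - k + 2 * min t (hammingNorm y) ≤
      hammingDist (indicatorVec Bᶜ) y + hammingNorm y := by
  let P : Finset (Fin n) := {i | y i ≠ 0}
  obtain ⟨B, hB, hcover⟩ := hS.exists_min_le_card_inter ht P
  refine ⟨B, hB, ?_⟩
  have hdist := hammingDist_indicatorVec_add Bᶜ y
  have hsplit := card_sdiff_add_card_inter P B
  have hoverlap : {i ∈ Bᶜ | y i ≠ 0} = P \ B := by
    ext i; simp [P, and_comm]
  rw [hoverlap, card_compl, Fintype.card_fin, hS.1 B hB] at hdist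
  have hnorm : hammingNorm y = #P := rfl
  rw [hnorm] at hdist ⊢
  omega

end IsCoveringDesign

theorem isPPRIC_of_forall_exists_far {L s r : ℕ} {C : Set (Fin L → ZMod 2)}
    (hC : ∀ c ∈ C, hammingNorm c = s)
    (hfar : ∀ y : Fin L → ZMod 2, r < hammingNorm y → ∃ c ∈ C, r + s < hammingDist c y) :
    IsPPRIC L s r C := by
  refine ⟨hC, Set.ext fun y => ?_⟩
  simp only [pball, Set.mem_ofPred_eq, Set.mem_iInter, hammingDist_zero_left]
  refine ⟨fun hy c hc => ?_, fun hy => ?_⟩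
  · calc hammingDist c y ≤ hammingDist c 0 + hammingDist 0 y := hammingDist_triangle c 0 y
      _ = s + hammingNorm y := by rw [hammingDist_zero_right, hammingDist_zero_left, hC c hc]
      _ ≤ r + s := by omega
  · by_contra! hr
    obtain ⟨c, hc, hcy⟩ := hfar y hr
    exact (hy c hc).not_gt hcy

def codeOfCoveringDesigns {L1 L2 : ℕ} (S1 : Finset (Finset (Fin L1)))
    (S2 : Finset (Finset (Fin L2))) : Finset (Fin (L1 + L2) → ZMod 2) :=
  S1.image (fun B => Fin.append (indicatorVec Bᶜ) 0) ∪
    S2.image (fun B => Fin.append 0 (indicatorVec Bᶜ))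

section codeOfCoveringDesigns

variable {s L1 L2 t1 t2 : ℕ} {S1 : Finset (Finset (Fin L1))} {S2 : Finset (Finset (Fin L2))}

theorem card_codeOfCoveringDesigns_le (S1 : Finset (Finset (Fin L1)))
    (S2 : Finset (Finset (Fin L2))) : #(codeOfCoveringDesigns S1 S2) ≤ #S1 + #S2 :=
  (card_union_le _ _).trans (add_le_add card_image_le card_image_le)

theorem hammingNorm_of_mem_codeOfCoveringDesigns (hs1 : s ≤ L1) (hs2 : s ≤ L2)
    (hS1 : ∀ B ∈ S1, #B = L1 - s) (hS2 : ∀ B ∈ S2, #B = L2 - s) {c : Fin (L1 + L2) → ZMod 2}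
    (hc : c ∈ codeOfCoveringDesigns S1 S2) : hammingNorm c = s := by
  rw [codeOfCoveringDesigns, mem_union, mem_image, mem_image] at hc
  rcases hc with ⟨B, hB, rfl⟩ | ⟨B, hB, rfl⟩ <;>
    rw [hammingNorm_append, hammingNorm_zero, hammingNorm_indicatorVec, card_compl,
      Fintype.card_fin]
  · rw [hS1 B hB]; omega
  · rw [hS2 B hB]; omega

theorem exists_far_mem_codeOfCoveringDesigns (hs1 : s ≤ L1) (hs2 : s ≤ L2) (ht1 : t1 ≤ L1)
    (ht2 : t2 ≤ L2) (hS1 : IsCoveringDesign L1 (L1 - s) t1 S1)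
    (hS2 : IsCoveringDesign L2 (L2 - s) t2 S2) {y : Fin (L1 + L2) → ZMod 2}
    (hy : t1 + t2 ≤ hammingNorm y) :
    ∃ c ∈ codeOfCoveringDesigns S1 S2, t1 + t2 + s ≤ hammingDist c y := by
  rw [← Fin.append_castAdd_natAdd (f := y), hammingNorm_append] at hy
  rcases le_total (hammingNorm (fun i => y (Fin.castAdd L2 i)) + t2)
      (hammingNorm (fun i => y (Fin.natAdd L1 i)) + t1) with h | h
  · obtain ⟨B, hB, hfar⟩ :=
      hS1.exists_far_indicatorVec_compl ht1 (fun i => y (Fin.castAdd L2 i))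
    refine ⟨_, mem_union_left _ (mem_image_of_mem _ hB), ?_⟩
    rw [hammingDist_append, hammingDist_zero_left]
    omega
  · obtain ⟨B, hB, hfar⟩ :=
      hS2.exists_far_indicatorVec_compl ht2 (fun i => y (Fin.natAdd L1 i))
    refine ⟨_, mem_union_right _ (mem_image_of_mem _ hB), ?_⟩
    rw [hammingDist_append, hammingDist_zero_left]
    omega

end codeOfCoveringDesigns

theorem stmt11_general (s L1 L2 t1 t2 : ℕ)
    (h1b : t1 < L1 - s) (h1c : 0 < t1)
    (h2b : t2 < L2 - s)
    (S1 : Finset (Finset (Fin L1))) (hS1 : IsCoveringDesign L1 (L1 - s) t1 S1)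
    (S2 : Finset (Finset (Fin L2))) (hS2 : IsCoveringDesign L2 (L2 - s) t2 S2) :
    ∃ C : Finset (Fin (L1 + L2) → ZMod 2),
      IsPPRIC (L1 + L2) s (t1 + t2 - 1) ↑C ∧ C.card ≤ S1.card + S2.card := by
  have hs1 : s ≤ L1 := by omega
  have hs2 : s ≤ L2 := by omega
  refine ⟨codeOfCoveringDesigns S1 S2, isPPRIC_of_forall_exists_far ?_ ?_,
    card_codeOfCoveringDesigns_le S1 S2⟩
  · exact fun c hc => hammingNorm_of_mem_codeOfCoveringDesigns hs1 hs2 hS1.1 hS2.1 hc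
  · intro y hy
    obtain ⟨c, hc, hfar⟩ := exists_far_mem_codeOfCoveringDesigns hs1 hs2 (by omega) (by omega)
      hS1 hS2 (y := y) (by omega)
    exact ⟨c, hc, by omega⟩

theorem stmt11 (s L1 L2 t1 t2 : ℕ)
    (h1a : L1 - s < L1) (h1b : t1 < L1 - s) (h1c : 0 < t1)
    (h2a : L2 - s < L2) (h2b : t2 < L2 - s) (h2c : 0 < t2)
    (S1 : Finset (Finset (Fin L1))) (hS1 : IsCoveringDesign L1 (L1 - s) t1 S1)
    (S2 : Finset (Finset (Fin L2))) (hS2 : IsCoveringDesign L2 (L2 - s) t2 S2) :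
    ∃ C : Finset (Fin (L1 + L2) → ZMod 2),
      IsPPRIC (L1 + L2) s (t1 + t2 - 1) ↑C ∧ C.card ≤ S1.card + S2.card :=
  stmt11_general s L1 L2 t1 t2 h1b h1c h2b S1 hS1 S2 hS2
end

section
/- Let r be an even nonnegative integer, let k ≥ 1 and 0 ≤ t ≤ r/2 be integers, and let s, L be positive integers such that k(k+1) divides s and 2k(k+1)·L ≥ ((r+2)(k+1)² − 2t + 2k(k+1))·s. Then there exists an (L,s,r) PPRIC code with exactly ((r+2)(k+1))/2 + t + 1 codewords. -/
/-!
Write `r + 2 = 2(t + v)` and `s = k(k+1)u`. The code lives on `t` blocks made of `k + 2` parts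
of size `ku`, `v` blocks made of `k + 1` parts of size `(k+1)u`, and one block of size `s`; its
codewords are the blocks with one part removed, together with the last block, all of weight `s`.
Since `d(c, y) = s + |y| - 2|c ∩ y|`, a word `y` in every ball `B(c, r + s)` meets every codeword
in at least `j = ⌈(|y| - r)/2⌉` positions. If `|y| > r`, then `j ≥ 1`, and `y` meets each of the
first `t + v` blocks in at least `j + 1` positions: otherwise, removing the part that contains
one of them leaves a codeword meeting `y` in fewer than `j`. Hence
`|y| ≥ (t + v)(j + 1) + j > r + 2j ≥ |y|`, a contradiction.
-/

open Finset

namespace PPRIC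

section BlockingBound

variable {α β : Type*} [DecidableEq α] [DecidableEq β]

def BlockingBound (C : Finset (Finset α)) (m : ℕ → ℕ) : Prop :=
  ∀ W : Finset α, ∀ j, 0 < j → (∀ c ∈ C, j ≤ #(c ∩ W)) → m j ≤ #W

lemma card_le_of_blockingBound {C : Finset (Finset α)} {m : ℕ → ℕ} {r : ℕ}
    (hC : BlockingBound C m) (hm : ∀ j, 0 < j → r + 2 * j < m j) {W : Finset α}
    (hW : ∀ c ∈ C, #W ≤ r + 2 * #(c ∩ W)) : #W ≤ r := by
  by_contra! h
  have hj : 0 < (#W - r + 1) / 2 := by omega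
  have := hm _ hj
  have := hC W _ hj fun c hc => by have := hW c hc; omega
  omega

lemma BlockingBound.map {C : Finset (Finset α)} {m : ℕ → ℕ} (hC : BlockingBound C m)
    (f : α ↪ β) : BlockingBound (C.map (mapEmbedding f).toEmbedding) m := by
  intro W j hj hW
  have hpre : ∀ c : Finset α, c.map f ∩ W = (c ∩ W.preimage f f.injective.injOn).map f := by
    intro c; ext y; simp only [mem_inter, mem_map, mem_preimage]; grind
  refine (hC (W.preimage f f.injective.injOn) j hj fun c hc => ?_).trans ?_
  · simpa [hpre] using hW _ (mem_map_of_mem _ hc)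
  · rw [← card_map f]
    exact card_le_card (by simp [map_subset_iff_subset_preimage])

lemma blockingBound_singleton_univ [Fintype α] : BlockingBound {(univ : Finset α)} id :=
  fun W j _ hW => by simpa using hW univ (mem_singleton_self _)

def sumCode (C : Finset (Finset α)) (D : Finset (Finset β)) : Finset (Finset (α ⊕ β)) :=
  C.map (mapEmbedding .inl).toEmbedding ∪ D.map (mapEmbedding .inr).toEmbedding

lemma card_sumCode {C : Finset (Finset α)} {D : Finset (Finset β)} (hC : ∅ ∉ C) :
    #(sumCode C D) = #C + #D := by
  rw [sumCode, card_union_of_disjoint, card_map, card_map]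
  simp only [disjoint_left, mem_map, RelEmbedding.coe_toEmbedding, mapEmbedding_apply]
  rintro _ ⟨c, hc, rfl⟩ ⟨d, -, hdc⟩
  obtain ⟨a, ha⟩ := nonempty_iff_ne_empty.mpr (ne_of_mem_of_not_mem hc hC)
  have : Sum.inl a ∈ d.map .inr := hdc ▸ mem_map_of_mem _ ha
  simp at this

lemma card_eq_of_mem_sumCode {C : Finset (Finset α)} {D : Finset (Finset β)} {s : ℕ}
    (hC : ∀ c ∈ C, #c = s) (hD : ∀ d ∈ D, #d = s) : ∀ c ∈ sumCode C D, #c = s := by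
  simp only [sumCode, mem_union, mem_map, RelEmbedding.coe_toEmbedding, mapEmbedding_apply]
  rintro _ (⟨c, hc, rfl⟩ | ⟨d, hd, rfl⟩)
  · rw [card_map, hC c hc]
  · rw [card_map, hD d hd]

lemma map_inl_inter (c : Finset α) (W : Finset (α ⊕ β)) :
    c.map .inl ∩ W = (c ∩ W.toLeft).map .inl := by
  ext (x | x) <;> simp

lemma map_inr_inter (d : Finset β) (W : Finset (α ⊕ β)) :
    d.map .inr ∩ W = (d ∩ W.toRight).map .inr := by
  ext (x | x) <;> simp

lemma BlockingBound.sumCode {C : Finset (Finset α)} {D : Finset (Finset β)} {m₁ m₂ : ℕ → ℕ}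
    (hC : BlockingBound C m₁) (hD : BlockingBound D m₂) :
    BlockingBound (sumCode C D) fun j => m₁ j + m₂ j := by
  intro W j hj hW
  rw [← card_toLeft_add_card_toRight]
  refine add_le_add (hC _ j hj fun c hc => ?_) (hD _ j hj fun d hd => ?_)
  · simpa [map_inl_inter] using hW _ (mem_union_left _ (mem_map_of_mem _ hc))
  · simpa [map_inr_inter] using hW _ (mem_union_right _ (mem_map_of_mem _ hd))

end BlockingBound

lemma lt_card_of_forall_le_card_filter_ne {α ι : Type*} [DecidableEq ι] [Nonempty ι]
    {X : Finset α} {f : α → ι} {j : ℕ} (hj : 0 < j) (hX : ∀ i, j ≤ #{x ∈ X | f x ≠ i}) :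
    j < #X := by
  obtain ⟨z, hz⟩ : X.Nonempty :=
    card_pos.mp (hj.trans_le ((hX (Classical.arbitrary ι)).trans (card_filter_le _ _)))
  exact (hX (f z)).trans_lt (card_lt_card (filter_ssubset.mpr ⟨z, hz, by simp⟩))

def gadgetWord (γ : Type*) {β ι : Type*} [Fintype ι] [DecidableEq ι] [Fintype γ] (b : β) (i : ι) :
    Finset (β × ι × γ) :=
  {b} ×ˢ ({i}ᶜ ×ˢ univ)

lemma mem_gadgetWord {β ι γ : Type*} [Fintype ι] [DecidableEq ι] [Fintype γ] {b : β} {i : ι}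
    {x : β × ι × γ} : x ∈ gadgetWord γ b i ↔ x.1 = b ∧ x.2.1 ≠ i := by
  simp only [gadgetWord, mem_product, mem_singleton, mem_compl, mem_univ, and_true]

section Gadget

variable (β ι γ : Type*) [Fintype β] [Fintype ι] [Fintype γ]
  [DecidableEq β] [DecidableEq ι] [DecidableEq γ]

def gadgetCode : Finset (Finset (β × ι × γ)) :=
  univ.image fun p : β × ι => gadgetWord γ p.1 p.2

variable {β ι γ}

lemma card_eq_of_mem_gadgetCode :
    ∀ c ∈ gadgetCode β ι γ, #c = (Fintype.card ι - 1) * Fintype.card γ := by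
  simp only [gadgetCode, mem_image, forall_exists_index, and_imp]
  rintro _ ⟨b, i⟩ - rfl
  rw [gadgetWord, card_product, card_product, card_singleton, card_compl, card_singleton,
    card_univ, one_mul]

lemma card_gadgetCode [Nontrivial ι] [Nonempty γ] :
    #(gadgetCode β ι γ) = Fintype.card β * Fintype.card ι := by
  rw [gadgetCode, card_image_of_injective, card_univ, Fintype.card_prod]
  rintro ⟨b, i⟩ ⟨b', i'⟩ h
  have hmem : ∀ x : β × ι × γ, x.1 = b ∧ x.2.1 ≠ i ↔ x.1 = b' ∧ x.2.1 ≠ i' := fun x => by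
    rw [← mem_gadgetWord, ← mem_gadgetWord]; exact Finset.ext_iff.mp h x
  obtain ⟨x⟩ := ‹Nonempty γ›
  obtain ⟨i₀, hi₀⟩ := exists_ne i
  obtain rfl : b = b' := ((hmem (b, i₀, x)).mp ⟨rfl, hi₀⟩).1
  by_contra hne
  have hi : i' ≠ i := fun h => hne (by rw [h])
  exact ((hmem (b, i', x)).mp ⟨rfl, hi⟩).2 rfl

lemma blockingBound_gadgetCode [Nonempty ι] :
    BlockingBound (gadgetCode β ι γ) fun j => Fintype.card β * (j + 1) := by
  intro W j hj hW
  have hfiber : ∀ b, j + 1 ≤ #{x ∈ W | x.1 = b} := fun b =>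
    lt_card_of_forall_le_card_filter_ne (f := fun x => x.2.1) hj fun i => by
      convert hW _ (mem_image_of_mem _ (mem_univ (b, i))) using 2
      ext x; simp only [mem_filter, mem_inter, mem_gadgetWord]; tauto
  rw [card_eq_sum_card_fiberwise (f := Prod.fst) (t := univ) (fun _ _ => mem_univ _)]
  simpa using sum_le_sum fun b (_ : b ∈ univ) => hfiber b

end Gadget

section Hamming

variable {ι : Type*} [Fintype ι] [DecidableEq ι]

lemma hammingDist_add_two_mul_card_inter (x y : ι → ZMod 2) :
    hammingDist x y + 2 * #(({i | x i ≠ 0} : Finset ι) ∩ ({i | y i ≠ 0} : Finset ι)) =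
      hammingNorm x + hammingNorm y := by
  rw [hammingDist, hammingNorm, hammingNorm, ← filter_and, card_filter, card_filter, card_filter,
    card_filter, mul_sum, ← sum_add_distrib, ← sum_add_distrib]
  refine sum_congr rfl fun i _ => ?_
  generalize x i = a, y i = b
  revert a b
  decide

lemma filter_indicator_ne_zero (T : Finset ι) :
    ({i | (T : Set ι).indicator (1 : ι → ZMod 2) i ≠ 0} : Finset ι) = T := by
  ext i; by_cases hi : i ∈ T <;> simp [hi]

lemma indicator_injective :
    Function.Injective fun T : Finset ι => (T : Set ι).indicator (1 : ι → ZMod 2) := by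
  intro T T' h
  rw [← filter_indicator_ne_zero T, ← filter_indicator_ne_zero T']
  simp only at h
  rw [h]

end Hamming

lemma isPPRIC_image_indicator {L s r : ℕ} {D : Finset (Finset (Fin L))} {m : ℕ → ℕ}
    (hwt : ∀ c ∈ D, #c = s) (hD : BlockingBound D m) (hm : ∀ j, 0 < j → r + 2 * j < m j) :
    IsPPRIC L s r
      ↑(D.image fun c : Finset (Fin L) => (c : Set (Fin L)).indicator (1 : Fin L → ZMod 2)) := by
  have hnorm : ∀ c ∈ D, hammingNorm ((c : Set (Fin L)).indicator (1 : Fin L → ZMod 2)) = s :=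
    fun c hc => by rw [hammingNorm, filter_indicator_ne_zero, hwt c hc]
  simp only [IsPPRIC, coe_image, Set.forall_mem_image, Set.biInter_image, mem_coe]
  refine ⟨hnorm, Set.Subset.antisymm (fun y hy => ?_) (fun y hy => ?_)⟩
  · simp only [pball, Set.mem_iInter, Set.mem_ofPred_eq, hammingDist_zero_left] at hy ⊢
    intro c hc
    have := hammingDist_triangle ((c : Set (Fin L)).indicator 1) 0 y
    rw [hammingDist_zero_right, hnorm c hc, hammingDist_zero_left] at this
    omega
  · simp only [pball, Set.mem_iInter, Set.mem_ofPred_eq, hammingDist_zero_left] at hy ⊢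
    refine card_le_of_blockingBound (W := {i | y i ≠ 0}) hD hm fun c hc => ?_
    have hdist := hammingDist_add_two_mul_card_inter ((c : Set (Fin L)).indicator 1) y
    rw [filter_indicator_ne_zero, hnorm c hc] at hdist
    have := hy c hc
    change _ = _ + #{i | y i ≠ 0} at hdist
    omega

section LayeredCode

variable (t v k u : ℕ)

abbrev LayeredSpace : Type :=
  (Fin t × Fin (k + 2) × Fin (k * u)) ⊕ (Fin v × Fin (k + 1) × Fin ((k + 1) * u)) ⊕
    Fin (k * (k + 1) * u)

def layeredCode : Finset (Finset (LayeredSpace t v k u)) :=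
  sumCode (gadgetCode (Fin t) (Fin (k + 2)) (Fin (k * u)))
    (sumCode (gadgetCode (Fin v) (Fin (k + 1)) (Fin ((k + 1) * u))) {univ})

variable {t v k u}

lemma card_layeredSpace :
    Fintype.card (LayeredSpace t v k u) =
      t * ((k + 2) * (k * u)) + (v * ((k + 1) * ((k + 1) * u)) + k * (k + 1) * u) := by
  simp [Fintype.card_sum, Fintype.card_prod]

lemma card_layeredSpace_le {r L : ℕ} (hk : 0 < k) (hv : r + 2 = 2 * (t + v))
    (hL : ((r + 2) * (k + 1) ^ 2 - 2 * t + 2 * k * (k + 1)) * (k * (k + 1) * u) ≤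
      2 * k * (k + 1) * L) :
    Fintype.card (LayeredSpace t v k u) ≤ L := by
  have hsub : (r + 2) * (k + 1) ^ 2 - 2 * t = 2 * (t * (k * (k + 2)) + v * (k + 1) ^ 2) := by
    have : 1 ≤ (k + 1) ^ 2 := Nat.one_le_pow _ _ k.succ_pos
    rw [hv, Nat.sub_eq_iff_eq_add (by nlinarith)]
    ring
  rw [hsub] at hL
  rw [card_layeredSpace]
  refine le_of_mul_le_mul_left (a := 2 * k * (k + 1)) (le_of_eq_of_le ?_ hL) (by positivity)
  ring

lemma card_eq_of_mem_layeredCode : ∀ c ∈ layeredCode t v k u, #c = k * (k + 1) * u := by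
  refine card_eq_of_mem_sumCode (fun c hc => ?_) (card_eq_of_mem_sumCode (fun c hc => ?_) ?_)
  · rw [card_eq_of_mem_gadgetCode c hc, Fintype.card_fin, Fintype.card_fin, Nat.add_one_sub_one]
    ring
  · rw [card_eq_of_mem_gadgetCode c hc, Fintype.card_fin, Fintype.card_fin, Nat.add_sub_cancel]
    ring
  · simp

lemma card_layeredCode (hk : 1 ≤ k) (hu : 0 < u) :
    #(layeredCode t v k u) = t * (k + 2) + (v * (k + 1) + 1) := by
  have : Nontrivial (Fin (k + 1)) := Fin.nontrivial_iff_two_le.mpr (by omega)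
  have : Nonempty (Fin (k * u)) := ⟨⟨0, by positivity⟩⟩
  have : Nonempty (Fin ((k + 1) * u)) := ⟨⟨0, by positivity⟩⟩
  rw [layeredCode, card_sumCode, card_sumCode, card_gadgetCode, card_gadgetCode, card_singleton]
  · simp
  all_goals
    intro h
    have := card_eq_of_mem_gadgetCode _ h
    simp only [card_empty, Fintype.card_fin, zero_eq_mul, mul_eq_zero] at this
    omega

lemma blockingBound_layeredCode :
    BlockingBound (layeredCode t v k u) fun j => t * (j + 1) + (v * (j + 1) + j) := by
  have := (blockingBound_gadgetCode (β := Fin t) (ι := Fin (k + 2)) (γ := Fin (k * u))).sumCode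
    ((blockingBound_gadgetCode (β := Fin v) (ι := Fin (k + 1)) (γ := Fin ((k + 1) * u))).sumCode
      (blockingBound_singleton_univ (α := Fin (k * (k + 1) * u))))
  simp only [Fintype.card_fin, id] at this
  exact this

end LayeredCode

end PPRIC

open PPRIC in
theorem stmt13_general (r k t s L : ℕ) (hr : Even r) (hk : 1 ≤ k)
    (ht : t ≤ r / 2) (hs : 0 < s)
    (hdvd : k * (k + 1) ∣ s)
    (hineq : ((r + 2) * (k + 1) ^ 2 - 2 * t + 2 * k * (k + 1)) * s ≤ 2 * k * (k + 1) * L) :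
    ∃ C : Finset (Fin L → ZMod 2),
      IsPPRIC L s r ↑C ∧ C.card = ((r + 2) * (k + 1)) / 2 + t + 1 := by
  obtain ⟨u, rfl⟩ := hdvd
  have hu : 0 < u := Nat.pos_of_mul_pos_left hs
  obtain ⟨v, hv⟩ : ∃ v, r + 2 = 2 * (t + v) := by
    obtain ⟨e, rfl⟩ := hr
    exact ⟨e + 1 - t, by omega⟩
  have hlen := card_layeredSpace_le (u := u) hk hv hineq
  obtain ⟨f⟩ := Function.Embedding.nonempty_of_card_le (hlen.trans_eq (Fintype.card_fin L).symm)
  refine ⟨_, isPPRIC_image_indicator ?_ (blockingBound_layeredCode.map f) ?_, ?_⟩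
  · simp only [mem_map, RelEmbedding.coe_toEmbedding, mapEmbedding_apply]
    rintro _ ⟨c, hc, rfl⟩
    rw [card_map, card_eq_of_mem_layeredCode c hc]
  · intro j hj
    nlinarith
  · rw [card_image_of_injective _ indicator_injective, card_map, card_layeredCode hk hu, hv,
      Nat.mul_assoc, Nat.mul_div_cancel_left _ two_pos]
    ring

theorem stmt13 (r k t s L : ℕ) (hr : Even r) (hk : 1 ≤ k)
    (ht : t ≤ r / 2) (hs : 0 < s) (hL : 0 < L)
    (hdvd : k * (k + 1) ∣ s)
    (hineq : ((r + 2) * (k + 1) ^ 2 - 2 * t + 2 * k * (k + 1)) * s ≤ 2 * k * (k + 1) * L) :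
    ∃ C : Finset (Fin L → ZMod 2),
      IsPPRIC L s r ↑C ∧ C.card = ((r + 2) * (k + 1)) / 2 + t + 1 :=
  stmt13_general r k t s L hr hk ht hs hdvd hineq
end

section
/- Let r, s, L be nonnegative integers with s ≥ 1 and L ≥ 2s + r + 1, let q ≥ 2 be an integer, and let C be a binary (L,s,r) PPRIC code. Let ι : ZMod 2 → Fin q be the map sending 0 to 0 and 1 to 1, and let C' = { ι ∘ c : c ∈ C } ⊆ (Fin L → Fin q). Then C' is a q-ary (L,s,r) PPRIC code, i.e., every codeword of C' has exactly s nonzero coordinates and { y : Fin L → Fin q | wt(y) ≤ r } = ⋂_{c' ∈ C'} { y | d(c', y) ≤ r + s }, where d is the Hamming distance on Fin L → Fin q and wt(y) the number of nonzero coordinates of y. -/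
/-- Hamming weight in the `q`-ary Hamming space: the number of nonzero coordinates. -/
def qwt (q L : ℕ) (y : Fin L → Fin q) : ℕ :=
  (Finset.univ.filter (fun i => (y i : ℕ) ≠ 0)).card

/-!
Identify a binary word with its image under `ι`. Weights are preserved, so the image of a
codeword of weight `s` still has weight `s`, and a `q`-ary word of weight at most `r` lies within
distance `s + r` of it by the triangle inequality through `0`. Conversely, a `q`-ary word `y` covered
by all the balls is replaced by its support indicator `z ∈ 𝔽₂^L`: `z` has the weight of `y`, and
`d(c, z) ≤ d(ι ∘ c, y)` because the indicator is a left inverse of `ι`. So `z` is covered by the binary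
balls and the binary PPRIC property bounds its weight by `r`.
-/

open Function

section Hamming

variable {n α β : Type*} [Fintype n] [DecidableEq α] [DecidableEq β]

theorem hammingDist_le_hammingNorm_add_hammingNorm [Zero α] (x y : n → α) :
    hammingDist x y ≤ hammingNorm x + hammingNorm y := by
  simpa only [hammingDist_zero_left, hammingDist_zero_right] using hammingDist_triangle x 0 y

theorem hammingNorm_comp_of_eq_zero_iff [Zero α] [Zero β] {f : α → β}
    (hf : ∀ a, f a = 0 ↔ a = 0) (x : n → α) : hammingNorm (f ∘ x) = hammingNorm x := by
  simp only [hammingNorm, comp_apply, ne_eq, hf]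

theorem hammingDist_le_hammingDist_comp {f : α → β} {g : β → α} (hgf : LeftInverse g f)
    (x : n → α) (y : n → β) : hammingDist x (g ∘ y) ≤ hammingDist (f ∘ x) y :=
  calc hammingDist x (g ∘ y) = hammingDist (g ∘ f ∘ x) (g ∘ y) := by
        rw [← comp_assoc, hgf.comp_eq_id]; rfl
    _ ≤ hammingDist (f ∘ x) y := hammingDist_comp_le_hammingDist fun _ => g

end Hamming

theorem mem_pball_zero {L r : ℕ} {z : Fin L → ZMod 2} : z ∈ pball L 0 r ↔ hammingNorm z ≤ r := by
  rw [← hammingDist_zero_left]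
  rfl

theorem qwt_eq_hammingNorm {q L : ℕ} [NeZero q] (y : Fin L → Fin q) : qwt q L y = hammingNorm y := by
  simp only [qwt, hammingNorm, ne_eq, Fin.val_eq_zero_iff]

section Embedding

variable {q : ℕ} [NeZero q]

def nonzeroIndicator (b : Fin q) : ZMod 2 := if b = 0 then 0 else 1

theorem nonzeroIndicator_eq_zero_iff (b : Fin q) : nonzeroIndicator b = 0 ↔ b = 0 := by
  unfold nonzeroIndicator
  split_ifs with hb <;> simp [hb]

theorem eq_zero_iff_of_val_eq {ι : ZMod 2 → Fin q} (hι : ∀ a : ZMod 2, ((ι a : Fin q) : ℕ) = a.val)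
    (a : ZMod 2) : ι a = 0 ↔ a = 0 := by
  rw [← Fin.val_eq_zero_iff, hι, ZMod.val_eq_zero]

theorem leftInverse_nonzeroIndicator_of_val_eq {ι : ZMod 2 → Fin q}
    (hι : ∀ a : ZMod 2, ((ι a : Fin q) : ℕ) = a.val) : LeftInverse nonzeroIndicator ι := by
  intro a
  unfold nonzeroIndicator
  split_ifs with ha
  · exact ((eq_zero_iff_of_val_eq hι a).mp ha).symm
  · rw [eq_zero_iff_of_val_eq hι] at ha
    revert a
    decide

end Embedding

theorem stmt15_general (L r s q : ℕ)
    (C : Set (Fin L → ZMod 2)) (hC : IsPPRIC L s r C)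
    (ι : ZMod 2 → Fin q) (hι : ∀ a : ZMod 2, ((ι a : Fin q) : ℕ) = a.val) :
    (∀ c' ∈ (fun c => ι ∘ c) '' C, qwt q L c' = s) ∧
    {y : Fin L → Fin q | qwt q L y ≤ r} =
      ⋂ c' ∈ (fun c => ι ∘ c) '' C, {y : Fin L → Fin q | hammingDist c' y ≤ r + s} := by
  have : NeZero q := NeZero.of_pos (ι 0).pos
  obtain ⟨hCwt, hCball⟩ := hC
  have hwt (c : Fin L → ZMod 2) : hammingNorm (ι ∘ c) = hammingNorm c :=
    hammingNorm_comp_of_eq_zero_iff (eq_zero_iff_of_val_eq hι) c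
  refine ⟨?_, ?_⟩
  · rintro _ ⟨c, hc, rfl⟩
    rw [qwt_eq_hammingNorm, hwt, hCwt c hc]
  ext y
  simp only [Set.mem_ofPred_eq, Set.mem_iInter, Set.forall_mem_image, qwt_eq_hammingNorm]
  constructor
  · intro hy c hc
    have := hammingDist_le_hammingNorm_add_hammingNorm (ι ∘ c) y
    rw [hwt, hCwt c hc] at this
    omega
  · intro hy
    have hz : nonzeroIndicator ∘ y ∈ pball L 0 r := by
      rw [hCball, Set.mem_iInter₂]
      exact fun c hc =>
        (hammingDist_le_hammingDist_comp (leftInverse_nonzeroIndicator_of_val_eq hι) c y).trans (hy hc)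
    rwa [mem_pball_zero, hammingNorm_comp_of_eq_zero_iff nonzeroIndicator_eq_zero_iff] at hz

theorem stmt15 (L r s q : ℕ) (hs : 1 ≤ s) (hL : 2 * s + r + 1 ≤ L) (hq : 2 ≤ q)
    (C : Set (Fin L → ZMod 2)) (hC : IsPPRIC L s r C)
    (ι : ZMod 2 → Fin q) (hι : ∀ a : ZMod 2, ((ι a : Fin q) : ℕ) = a.val) :
    (∀ c' ∈ (fun c => ι ∘ c) '' C, qwt q L c' = s) ∧
    {y : Fin L → Fin q | qwt q L y ≤ r} =
      ⋂ c' ∈ (fun c => ι ∘ c) '' C, {y : Fin L → Fin q | hammingDist c' y ≤ r + s} :=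
  stmt15_general L r s q C hC ι hι
end

section
/- Let n, L, s, r be nonnegative integers with s ≥ 1, L ≥ s(2r+3) and 2L ≤ n, and let x be an L-element subset of an n-element set. Then there exists a set C ⊆ W^x_s with |C| = 2r + 3 such that B_J(x, r) = ⋂_{c ∈ C} B_J(c, r + s). -/
/-!
Split `x` into `2r+3` disjoint `s`-blocks `Aᵢ` and choose `2r+3` disjoint `s`-blocks `Bᵢ` outside
`x` (room exists since `2L ≤ n`); the centres are `cᵢ = (x \ Aᵢ) ∪ Bᵢ`. For `y` with
`d = |x \ y| = |y \ x|` one has `|cᵢ \ y| = d + s - |(x \ y) ∩ Aᵢ| - |(y \ x) ∩ Bᵢ|`. If this is at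
most `r + s` for every `i`, summing over `i` and using disjointness of the blocks gives
`(2r+3) d ≤ (2r+3) r + 2d`, which forces `d ≤ r`.
-/

open Finset Function

theorem Finset.exists_pairwise_disjoint_subsets_card_eq {α : Type*} {t : Finset α} {m k : ℕ}
    (ht : m * k ≤ #t) :
    ∃ A : Fin m → Finset α, (∀ i, A i ⊆ t) ∧ (∀ i, #(A i) = k) ∧ Pairwise (Disjoint on A) := by
  obtain ⟨u, hut, hu⟩ := t.exists_subset_card_eq ht
  let e : Fin m × Fin k ≃ u := finProdFinEquiv.trans (u.equivFinOfCardEq hu).symm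
  have he : Injective fun p => (e p : α) := Subtype.val_injective.comp e.injective
  refine ⟨fun i => univ.map ⟨fun j => e (i, j), fun j j' h => (Prod.ext_iff.1 (he h)).2⟩,
    ?_, fun i => by simp, ?_⟩
  · intro i a ha
    obtain ⟨j, -, rfl⟩ := mem_map.1 ha
    exact hut (e (i, j)).2
  · intro i i' hii'
    simp only [onFun, disjoint_left, mem_map, mem_univ, true_and, not_exists,
      forall_exists_index]
    rintro _ j rfl j' h
    exact hii' (Prod.ext_iff.1 (he h)).1.symm

theorem Finset.sum_card_inter_le_of_pairwise_disjoint {α ι : Type*} [DecidableEq α] [Fintype ι]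
    {A : ι → Finset α} (hA : Pairwise (Disjoint on A)) (t : Finset α) :
    ∑ i, #(t ∩ A i) ≤ #t := by
  rw [← card_biUnion fun i _ j _ hij => (hA hij).mono inter_subset_right inter_subset_right]
  exact card_le_card (biUnion_subset.2 fun _ _ => inter_subset_left)

section Exchange

variable {α : Type*} [DecidableEq α] {x y a b : Finset α}

def Finset.exchange (x a b : Finset α) : Finset α := x \ a ∪ b

theorem Finset.exchange_sdiff (x a b y : Finset α) :
    x.exchange a b \ y = (x \ y) \ a ∪ b \ y := by
  ext
  simp only [exchange, mem_sdiff, mem_union]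
  tauto

theorem Finset.card_exchange_add (ha : a ⊆ x) (hb : Disjoint b x) :
    #(x.exchange a b) + #a = #x + #b := by
  rw [exchange, card_union_of_disjoint (hb.symm.mono_left sdiff_subset), card_sdiff_of_subset ha]
  have := card_le_card ha
  omega

theorem Finset.sdiff_exchange (ha : a ⊆ x) (hb : Disjoint b x) : x \ x.exchange a b = a := by
  ext z
  have := @ha z
  have : z ∈ b → z ∉ x := fun h => disjoint_left.1 hb h
  simp only [exchange, mem_sdiff, mem_union, not_or, not_and, not_not]
  tauto

theorem Finset.card_exchange_sdiff_add (hb : Disjoint b x) :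
    #(x.exchange a b \ y) + #((x \ y) ∩ a) + #((y \ x) ∩ b) = #(x \ y) + #b := by
  have hby : (y \ x) ∩ b = b ∩ y := by
    ext z
    have : z ∈ b → z ∉ x := fun h => disjoint_left.1 hb h
    simp only [mem_inter, mem_sdiff]
    tauto
  rw [exchange_sdiff,
    card_union_of_disjoint (hb.symm.mono (sdiff_subset.trans sdiff_subset) sdiff_subset), hby,
    ← card_sdiff_add_card_inter (x \ y) a, ← card_sdiff_add_card_inter b y]
  ring

theorem Finset.card_mul_card_sdiff_le_of_exchange {ι : Type*} [Fintype ι] {A B : ι → Finset α}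
    {r : ℕ} (hA : Pairwise (Disjoint on A)) (hB : Pairwise (Disjoint on B))
    (hBx : ∀ i, Disjoint (B i) x) (hxy : #x = #y)
    (hr : ∀ i, #(x.exchange (A i) (B i) \ y) ≤ r + #(B i)) :
    Fintype.card ι * #(x \ y) ≤ Fintype.card ι * r + 2 * #(x \ y) := by
  have hyx : #(y \ x) = #(x \ y) := card_sdiff_comm hxy.symm
  have key (i : ι) : #(x \ y) ≤ r + #((x \ y) ∩ A i) + #((y \ x) ∩ B i) := by
    have := card_exchange_sdiff_add (a := A i) (y := y) (hBx i)
    have := hr i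
    omega
  calc Fintype.card ι * #(x \ y) = ∑ _i : ι, #(x \ y) := by simp
    _ ≤ ∑ i, (r + #((x \ y) ∩ A i) + #((y \ x) ∩ B i)) := sum_le_sum fun i _ => key i
    _ = Fintype.card ι * r + ∑ i, #((x \ y) ∩ A i) + ∑ i, #((y \ x) ∩ B i) := by
      simp [sum_add_distrib]
    _ ≤ Fintype.card ι * r + #(x \ y) + #(y \ x) := by
      gcongr <;> exact sum_card_inter_le_of_pairwise_disjoint ‹_› _
    _ = Fintype.card ι * r + 2 * #(x \ y) := by omega

end Exchange

theorem stmt18 (n L s r : ℕ) (hs : 1 ≤ s) (hL : s * (2 * r + 3) ≤ L)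
    (hn : 2 * L ≤ n) (x : Finset (Fin n)) (hx : x.card = L) :
    ∃ C : Finset (Finset (Fin n)),
      (∀ c ∈ C, c.card = L ∧ (x \ c).card = s) ∧
      C.card = 2 * r + 3 ∧
      {y : Finset (Fin n) | y.card = L ∧ (x \ y).card ≤ r} =
        ⋂ c ∈ C, {y : Finset (Fin n) | y.card = L ∧ (c \ y).card ≤ r + s} := by
  obtain ⟨A, hAx, hAcard, hAdisj⟩ := exists_pairwise_disjoint_subsets_card_eq (t := x)
    (m := 2 * r + 3) (k := s) (by rw [hx, mul_comm]; exact hL)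
  obtain ⟨B, hBx, hBcard, hBdisj⟩ := exists_pairwise_disjoint_subsets_card_eq (t := xᶜ)
    (m := 2 * r + 3) (k := s) (by rw [card_compl, hx, Fintype.card_fin, mul_comm]; omega)
  replace hBx (i) : Disjoint (B i) x := subset_compl_iff_disjoint_right.mp (hBx i)
  let c i := x.exchange (A i) (B i)
  have hxc (i) : x \ c i = A i := sdiff_exchange (hAx i) (hBx i)
  have hc_card (i) : #(c i) = L := by
    have : #(c i) + #(A i) = #x + #(B i) := card_exchange_add (hAx i) (hBx i)
    rw [hAcard, hBcard] at this
    omega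
  have hc_inj : Injective c := by
    intro i j hij
    by_contra hne
    have := hAdisj hne
    rw [onFun, ← hxc i, ← hxc j, hij, disjoint_self, bot_eq_empty, hxc, ← card_eq_zero,
      hAcard] at this
    omega
  refine ⟨univ.image c, ?_, by simp [card_image_of_injective _ hc_inj], ?_⟩
  · simp only [mem_image, mem_univ, true_and, forall_exists_index, forall_apply_eq_imp_iff]
    exact fun i => ⟨hc_card i, by rw [hxc, hAcard]⟩
  ext y
  simp only [Set.mem_ofPred_eq, Set.mem_iInter, mem_image, mem_univ, true_and,
    forall_exists_index, forall_apply_eq_imp_iff]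
  constructor
  · rintro ⟨hy, hyr⟩ i
    have : #(c i \ y) + #((x \ y) ∩ A i) + #((y \ x) ∩ B i) = #(x \ y) + #(B i) :=
      card_exchange_sdiff_add (hBx i)
    exact ⟨hy, by rw [hBcard] at this; omega⟩
  · intro h
    have hy := (h 0).1
    have := card_mul_card_sdiff_le_of_exchange hAdisj hBdisj hBx (hx.trans hy.symm)
      (fun i => hBcard i ▸ (h i).2)
    rw [Fintype.card_fin] at this
    -- `d ≥ r + 1` would give `(2r+1)(r+1) ≤ (2r+3) r`
    exact ⟨hy, by nlinarith⟩
end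

section
/- Let n, L, s, r be nonnegative integers with s ≥ 1, L ≥ s(2r+3) and 2L ≤ n, and let x be an L-element subset of an n-element set. Then every set C ⊆ W^x_s satisfying B_J(x, r) = ⋂_{c ∈ C} B_J(c, r + s) has |C| ≥ 2r + 3. -/
/-!
Suppose `|C| ≤ 2r + 2` and split `C` into two parts `C₁`, `C₂` of at most `r + 1` words each.
Pick `T ⊆ x` of size `r + 1` meeting `x \ c` for every `c ∈ C₁`, and `A` outside `x` of size
`r + 1` meeting `c \ x` for every `c ∈ C₂` (this is where `L ≥ r + 1` and `n - L ≥ r + 1` are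
needed). Swapping `T` out of `x` and `A` in gives a word `y` at distance `r + 1` from `x`.
For `c ∈ C₁` the swap keeps at least one point of `T` that `c` misses, and for `c ∈ C₂` it adds
a point of `c \ x`; either way `|c \ y| ≤ r + s`. So `y` lies in every ball `B(c, r + s)` but
not in `B(x, r)`.
-/

open Finset

namespace Finset

variable {α : Type*} [DecidableEq α]

lemma exists_subset_card_le_sdiff_card_le (C : Finset α) {a b : ℕ}
    (hC : C.card ≤ a + b) : ∃ C₁ ⊆ C, C₁.card ≤ a ∧ (C \ C₁).card ≤ b := by
  obtain ⟨C₁, hC₁, hcard⟩ := exists_subset_card_eq (min_le_right a C.card)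
  refine ⟨C₁, hC₁, hcard ▸ min_le_left _ _, ?_⟩
  rw [card_sdiff_of_subset hC₁, hcard]
  omega

lemma exists_subset_card_eq_forall_inter_nonempty {ι : Type*} (F : Finset ι) (S : ι → Finset α)
    {U : Finset α} {k : ℕ} (hS : ∀ i ∈ F, (S i).Nonempty) (hSU : ∀ i ∈ F, S i ⊆ U)
    (hF : F.card ≤ k) (hk : k ≤ U.card) :
    ∃ T ⊆ U, T.card = k ∧ ∀ i ∈ F, (T ∩ S i).Nonempty := by
  choose p hp using hS
  let P := F.attach.image fun i => p i.1 i.2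
  have hPU : P ⊆ U := by
    simp only [P, image_subset_iff]
    exact fun i _ => hSU i.1 i.2 (hp i.1 i.2)
  obtain ⟨T, hPT, hTU, hT⟩ :=
    exists_subsuperset_card_eq hPU (card_image_le.trans (card_attach.trans_le hF)) hk
  refine ⟨T, hTU, hT, fun i hi => ⟨p i hi, mem_inter.2 ⟨hPT ?_, hp i hi⟩⟩⟩
  exact mem_image_of_mem (fun i : F => p i.1 i.2) (mem_attach F ⟨i, hi⟩)

variable {x T A : Finset α}

lemma card_sdiff_union (hT : T ⊆ x) (hA : Disjoint A x) :
    (x \ T ∪ A).card = x.card - T.card + A.card := by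
  rw [card_union_of_disjoint (disjoint_of_subset_right sdiff_subset hA).symm,
    card_sdiff_of_subset hT]

lemma sdiff_sdiff_union (hT : T ⊆ x) (hA : Disjoint A x) : x \ (x \ T ∪ A) = T := by
  ext u
  have hAu : u ∈ A → u ∉ x := fun h => disjoint_left.1 hA h
  have hTu : u ∈ T → u ∈ x := fun h => hT h
  simp only [mem_sdiff, mem_union]
  tauto

lemma sdiff_sdiff_union_subset (c : Finset α) :
    c \ (x \ T ∪ A) ⊆ (c \ x) \ A ∪ T ∩ c := by
  intro u
  simp only [mem_sdiff, mem_union, mem_inter]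
  tauto

lemma card_sdiff_sdiff_union_le (c : Finset α) {r s : ℕ} (hTcard : T.card = r + 1)
    (hcx : (c \ x).card = s)
    (hit : (T ∩ (x \ c)).Nonempty ∨ (A ∩ (c \ x)).Nonempty) :
    (c \ (x \ T ∪ A)).card ≤ r + s := by
  refine (card_le_card (sdiff_sdiff_union_subset c)).trans (card_union_le _ _) |>.trans ?_
  rcases hit with ⟨u, hu⟩ | ⟨u, hu⟩
  · simp only [mem_inter, mem_sdiff] at hu
    have hTc : T ∩ c ⊂ T :=
      (ssubset_iff_of_subset inter_subset_left).2 ⟨u, hu.1, by simp [hu.2.2]⟩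
    have hcxA := card_le_card (sdiff_subset : (c \ x) \ A ⊆ c \ x)
    have := card_lt_card hTc
    omega
  · have hcA : (c \ x) \ A ⊂ c \ x :=
      (ssubset_iff_of_subset sdiff_subset).2 ⟨u, (mem_inter.1 hu).2, by simp [(mem_inter.1 hu).1]⟩
    have hTc := card_le_card (inter_subset_left : T ∩ c ⊆ T)
    have := card_lt_card hcA
    omega

end Finset

theorem stmt19 (n L s r : ℕ) (hs : 1 ≤ s) (hL : s * (2 * r + 3) ≤ L)
    (hn : 2 * L ≤ n) (x : Finset (Fin n)) (hx : x.card = L)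
    (C : Finset (Finset (Fin n)))
    (hCmem : ∀ c ∈ C, c.card = L ∧ (x \ c).card = s)
    (hCeq : {y : Finset (Fin n) | y.card = L ∧ (x \ y).card ≤ r} =
      ⋂ c ∈ C, {y : Finset (Fin n) | y.card = L ∧ (c \ y).card ≤ r + s}) :
    2 * r + 3 ≤ C.card := by
  by_contra! hC
  have hrL : r + 1 ≤ L := le_trans (by nlinarith) hL
  have hcx (c) (hc : c ∈ C) : (c \ x).card = s :=
    (card_sdiff_comm (by rw [(hCmem c hc).1, hx])).trans (hCmem c hc).2
  obtain ⟨C₁, hC₁, hC₁card, hC₂card⟩ :=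
    exists_subset_card_le_sdiff_card_le C (a := r + 1) (b := r + 1) (by omega)
  obtain ⟨T, hTx, hTcard, hT⟩ := exists_subset_card_eq_forall_inter_nonempty C₁ (x \ ·)
    (fun c hc => card_pos.1 (by rw [(hCmem c (hC₁ hc)).2]; omega))
    (fun _ _ => sdiff_subset) hC₁card (hx ▸ hrL)
  obtain ⟨A, hAx, hAcard, hA⟩ := exists_subset_card_eq_forall_inter_nonempty (C \ C₁) (· \ x) (U := xᶜ)
    (fun c hc => card_pos.1 (by rw [hcx c (sdiff_subset hc)]; omega))
    (fun c _ => sdiff_eq_inter_compl c x ▸ inter_subset_right) hC₂card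
    (by rw [card_compl, hx, Fintype.card_fin]; omega)
  have hAx : Disjoint A x := subset_compl_iff_disjoint_right.1 hAx
  have hy : x \ T ∪ A ∈ ⋂ c ∈ C, {y : Finset (Fin n) | y.card = L ∧ (c \ y).card ≤ r + s} := by
    simp only [Set.mem_iInter, Set.mem_ofPred_eq]
    refine fun c hc => ⟨by rw [card_sdiff_union hTx hAx]; omega, ?_⟩
    refine card_sdiff_sdiff_union_le c hTcard (hcx c hc) ?_
    by_cases hc₁ : c ∈ C₁
    · exact .inl (hT c hc₁)
    · exact .inr (hA c (mem_sdiff.2 ⟨hc, hc₁⟩))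
  rw [← hCeq, Set.mem_ofPred_eq, sdiff_sdiff_union hTx hAx, hTcard] at hy
  omega
end
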